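/- Assume Eξ < ∞ and that the walk is transient (E log ξ < ∞, E log ρ < 0). If there exist constants c > 0, γ > 0 and a sequence (b(n))_{n∈ℕ} which is regularly varying with index 1/γ such that for every x > 0, lim_{n→∞} ℙ[ max_{k ≤ S_n} L_k(S_n) / b(n) > x ] = 1 − exp(−c x^{−γ}), then for every x > 0, lim_{n→∞} ℙ[ max_{k ≤ n} L_k(n) / b(n) > x ] = 1 − exp(−(c/Eξ) x^{−γ}). -/

import Mathlib

open MeasureTheory ProbabilityTheory Filter Set Asymptotics
open scoped ENNReal NNReal Classical

noncomputable section

variable {Ω : Type*} [MeasurableSpace Ω]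

/-- Two-sided renewal sums `S_n` of the block lengths `ξ_j`. -/
def Spt (xi : ℤ → Ω → ℕ) (n : ℤ) (ω : Ω) : ℤ :=
  if 0 ≤ n then ∑ j ∈ Finset.range n.toNat, (xi (j + 1) ω : ℤ)
  else -∑ j ∈ Finset.range (-n).toNat, (xi (n + 1 + j) ω : ℤ)

/-- The sparse environment: `ω_k = λ_{n+1}` if `k = S_n` for some `n`, and `1/2` otherwise. -/
def envP (xi : ℤ → Ω → ℕ) (lam : ℤ → Ω → ℝ) (k : ℤ) (ω : Ω) : ℝ :=
  if h : ∃ n : ℤ, Spt xi n ω = k then lam (h.choose + 1) ω else 1 / 2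

/-- `ρ_k = (1 - λ_k)/λ_k`. -/
def rhoF (lam : ℤ → Ω → ℝ) (k : ℤ) (ω : Ω) : ℝ := (1 - lam k ω) / lam k ω

/-- Hitting time `T_n` of the site `n`. -/
def hitT (X : ℕ → Ω → ℤ) (n : ℤ) (ω : Ω) : ℕ := sInf {m : ℕ | X m ω = n}

/-- Local time `L_k(n)`: the number of visits to `k` up to time `T_n`. -/
def locL (X : ℕ → Ω → ℤ) (k n : ℤ) (ω : Ω) : ℕ :=
  ((Finset.range (hitT X n ω + 1)).filter fun m => X m ω = k).card

/-- `max_{k ≤ n} L_k(n)`, as an extended nonnegative real. -/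
def maxLoc (X : ℕ → Ω → ℤ) (n : ℤ) (ω : Ω) : ℝ≥0∞ :=
  ⨆ (k : ℤ) (_ : k ≤ n), (locL X k n ω : ℝ≥0∞)

/-- σ-algebra generated by the environment and the walk up to time `n`. -/
def walkFilt (xi : ℤ → Ω → ℕ) (lam : ℤ → Ω → ℝ) (X : ℕ → Ω → ℤ) (n : ℕ) :
    MeasurableSpace Ω :=
  (⨆ k : ℤ, MeasurableSpace.comap (fun ω => (xi k ω, lam k ω)) inferInstance) ⊔
    ⨆ m ∈ Finset.range (n + 1), MeasurableSpace.comap (X m) inferInstance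

/-- `Pr` is the annealed law of a random walk `X` in the sparse random environment built from
the i.i.d. sequence `((ξ_k, λ_k))_{k ∈ ℤ}`: the environment is i.i.d., the walk starts at `0`
and, conditionally on the environment and the past, steps up with probability `ω_k` and down
with probability `1 - ω_k` from site `k`. -/
structure IsRWSRE (Pr : Measure Ω) (xi : ℤ → Ω → ℕ) (lam : ℤ → Ω → ℝ)
    (X : ℕ → Ω → ℤ) : Prop where
  meas_xi : ∀ k, Measurable (xi k)
  meas_lam : ∀ k, Measurable (lam k)
  meas_X : ∀ n, Measurable (X n)
  xi_pos : ∀ k ω, 1 ≤ xi k ω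
  lam_mem : ∀ k ω, lam k ω ∈ Set.Ioo (0 : ℝ) 1
  indep : iIndepFun (fun k ω => (xi k ω, lam k ω)) Pr
  ident : ∀ k, IdentDistrib (fun ω => (xi k ω, lam k ω)) (fun ω => (xi 0 ω, lam 0 ω)) Pr Pr
  start : ∀ ω, X 0 ω = 0
  step_up : ∀ (n : ℕ) (A : Set Ω), MeasurableSet[walkFilt xi lam X n] A →
    (Pr (A ∩ {ω | X (n + 1) ω = X n ω + 1})).toReal = ∫ ω in A, envP xi lam (X n ω) ω ∂Pr
  step_down : ∀ (n : ℕ) (A : Set Ω), MeasurableSet[walkFilt xi lam X n] A →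
    (Pr (A ∩ {ω | X (n + 1) ω = X n ω - 1})).toReal
      = ∫ ω in A, (1 - envP xi lam (X n ω) ω) ∂Pr


open Topology

/-!
On a nearest-neighbour path started at `0`, `maxLoc X a ≤ maxLoc X N` whenever `0 ≤ a ≤ N` and
`N` is visited. By the strong law, `S_⌊tn⌋ ≈ tn Eξ`, so `S_⌊tn⌋` lies above `n` when `t > 1/Eξ`
and below `n` when `t < 1/Eξ`, with probability tending to one, while by regular variation
`b ⌊tn⌋ ≈ t^{1/γ} b n`. Comparing `maxLoc X n` with `maxLoc X S_⌊tn⌋` thus sandwiches the law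
of `maxLoc X n / b n` at level `x` between the Fréchet laws at levels `x t^{-1/γ}` for `t` on
either side of `1/Eξ`; letting `t → 1/Eξ` gives the constant `c/Eξ`. That the marked points
are visited with probability tending to one is itself read off the hypothesis: an unvisited
site has maximal local time `1`, which is eventually below `y b k` for every `y > 0`.
-/

lemma measurable_of_eqOn_cover {α β ι : Type*} [MeasurableSpace α] [MeasurableSpace β]
    [Countable ι] {t : ι → Set α} (ht : ∀ i, MeasurableSet (t i)) (hcover : ⋃ i, t i = univ)
    {f : α → β} {g : ι → α → β} (hg : ∀ i, Measurable (g i)) (hfg : ∀ i, EqOn f (g i) (t i)) :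
    Measurable f := by
  intro s hs
  have : f ⁻¹' s = ⋃ i, t i ∩ g i ⁻¹' s := by
    ext x
    obtain ⟨i, hi⟩ := mem_iUnion.1 (hcover ▸ mem_univ x)
    simp only [mem_preimage, mem_iUnion, mem_inter_iff]
    exact ⟨fun h => ⟨i, hi, hfg i hi ▸ h⟩, fun ⟨j, hj, h⟩ => hfg j hj ▸ h⟩
  rw [this]
  exact .iUnion fun i => (ht i).inter (hg i hs)

lemma tendsto_measureReal_setOf_notMem {α E : Type*} [MeasurableSpace α] [PseudoMetricSpace E]
    {μ : Measure α} [IsFiniteMeasure μ] {f : ℕ → α → E} {L : E} {s : Set E}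
    (hf : ∀ n, AEStronglyMeasurable (f n) μ) (hfL : ∀ᵐ x ∂μ, Tendsto (f · x) atTop (𝓝 L))
    (hs : s ∈ 𝓝 L) : Tendsto (fun n => μ.real {x | f n x ∉ s}) atTop (𝓝 0) := by
  obtain ⟨ε, hε, hball⟩ := Metric.mem_nhds_iff.1 hs
  refine squeeze_zero (fun _ => measureReal_nonneg) (fun n => measureReal_mono fun x hx => ?_)
    (tendstoInMeasure_iff_measureReal_dist.1 (tendstoInMeasure_of_tendsto_ae hf hfL) ε hε)
  exact not_lt.1 fun h => hx (hball (Metric.mem_ball.2 h))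

lemma measureReal_le_add_add_of_ae {α : Type*} [MeasurableSpace α] {μ : Measure α}
    [IsFiniteMeasure μ] {s t₁ t₂ t₃ : Set α} (h : ∀ᵐ x ∂μ, x ∈ s → x ∈ t₁ ∨ x ∈ t₂ ∨ x ∈ t₃) :
    μ.real s ≤ μ.real t₁ + μ.real t₂ + μ.real t₃ :=
  calc μ.real s ≤ μ.real (t₁ ∪ t₂ ∪ t₃) :=
        ENNReal.toReal_mono (measure_ne_top _ _) <| measure_mono_ae <| h.mono fun x hx hs =>
          show x ∈ t₁ ∪ t₂ ∪ t₃ by simpa only [mem_union, or_assoc] using hx hs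
    _ ≤ μ.real (t₁ ∪ t₂) + μ.real t₃ := measureReal_union_le _ _
    _ ≤ μ.real t₁ + μ.real t₂ + μ.real t₃ := by gcongr; exact measureReal_union_le _ _

lemma eventually_mul_lt_mul_of_tendsto_div_of_mul_lt {ι : Type*} {l : Filter ι} {u v : ι → ℝ}
    {ρ x y : ℝ} (hv : ∀ᶠ i in l, 0 < v i) (h : Tendsto (fun i => u i / v i) l (𝓝 ρ))
    (hyx : y * ρ < x) : ∀ᶠ i in l, y * u i < x * v i := by
  filter_upwards [hv, (h.const_mul y).eventually_lt_const hyx] with i hvi hi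
  calc y * u i = y * (u i / v i) * v i := by field_simp
    _ < x * v i := by gcongr

lemma eventually_mul_lt_mul_of_tendsto_div_of_lt_mul {ι : Type*} {l : Filter ι} {u v : ι → ℝ}
    {ρ x y : ℝ} (hv : ∀ᶠ i in l, 0 < v i) (h : Tendsto (fun i => u i / v i) l (𝓝 ρ))
    (hxy : x < y * ρ) : ∀ᶠ i in l, x * v i < y * u i := by
  filter_upwards [hv, (h.const_mul y).eventually_const_lt hxy] with i hvi hi
  calc x * v i < y * (u i / v i) * v i := by gcongr
    _ = y * u i := by field_simp

lemma tendsto_of_forall_eventually_lt {ι β : Type*} [TopologicalSpace β] [LinearOrder β]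
    [OrderTopology β] {l : Filter ι} {f : ℝ → β} {z : ℝ} {p : ι → β} (hf : ContinuousAt f z)
    (hup : ∀ᶠ y in 𝓝[<] z, ∀ a, f y < a → ∀ᶠ i in l, p i < a)
    (hlow : ∀ᶠ y in 𝓝[>] z, ∀ a, a < f y → ∀ᶠ i in l, a < p i) :
    Tendsto p l (𝓝 (f z)) := by
  refine tendsto_order.2 ⟨fun a ha => ?_, fun a ha => ?_⟩
  · obtain ⟨y, hy, hfy⟩ :=
      (hlow.and ((hf.eventually (lt_mem_nhds ha)).filter_mono nhdsWithin_le_nhds)).exists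
    exact hy a hfy
  · obtain ⟨y, hy, hfy⟩ :=
      (hup.and ((hf.eventually (gt_mem_nhds ha)).filter_mono nhdsWithin_le_nhds)).exists
    exact hy a hfy

lemma exists_one_lt_mul_and_mul_rpow_lt {E γ x y : ℝ} (hE : 0 < E) (hγ : 0 < γ)
    (hyx : y < x * E ^ (1 / γ)) : ∃ t, 0 < t ∧ 1 < E * t ∧ y * t ^ (1 / γ) < x := by
  have h0 : y * E⁻¹ ^ (1 / γ) < x := by
    rwa [Real.inv_rpow hE.le, ← div_eq_mul_inv, div_lt_iff₀ (by positivity)]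
  have hcont : ContinuousAt (fun t : ℝ => y * t ^ (1 / γ)) E⁻¹ :=
    continuousAt_const.mul (Real.continuousAt_rpow_const _ _ (Or.inr (by positivity)))
  obtain ⟨t, hxt, ht⟩ := (((hcont.eventually (gt_mem_nhds h0)).filter_mono
    nhdsWithin_le_nhds).and (self_mem_nhdsWithin (s := Ioi E⁻¹))).exists
  exact ⟨t, (inv_pos.2 hE).trans ht, (inv_lt_iff_one_lt_mul₀' hE).1 ht, hxt⟩

lemma exists_mul_lt_one_and_lt_mul_rpow {E γ x y : ℝ} (hE : 0 < E) (hγ : 0 < γ)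
    (hxy : x * E ^ (1 / γ) < y) : ∃ t, 0 < t ∧ E * t < 1 ∧ x < y * t ^ (1 / γ) := by
  have h0 : x < y * E⁻¹ ^ (1 / γ) := by
    rwa [Real.inv_rpow hE.le, ← div_eq_mul_inv, lt_div_iff₀ (by positivity)]
  have hcont : ContinuousAt (fun t : ℝ => y * t ^ (1 / γ)) E⁻¹ :=
    continuousAt_const.mul (Real.continuousAt_rpow_const _ _ (Or.inr (by positivity)))
  obtain ⟨t, hxt, ht⟩ := (((hcont.eventually (lt_mem_nhds h0)).filter_mono
    nhdsWithin_le_nhds).and (Ioo_mem_nhdsLT (inv_pos.2 hE))).exists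
  exact ⟨t, ht.1, (lt_inv_mul_iff₀ hE).1 (by rw [mul_one]; exact ht.2), hxt⟩

section Environment

variable {xi : ℤ → Ω → ℕ} {lam : ℤ → Ω → ℝ}

section

omit [MeasurableSpace Ω]

lemma Spt_natCast (m : ℕ) (ω : Ω) :
    Spt xi m ω = ∑ j ∈ Finset.range m, (xi (j + 1) ω : ℤ) := by
  simp [Spt]

lemma Spt_natCast_nonneg (m : ℕ) (ω : Ω) : 0 ≤ Spt xi m ω := by
  rw [Spt_natCast]
  positivity

lemma natCast_le_Spt (hpos : ∀ k ω, 1 ≤ xi k ω) (m : ℕ) (ω : Ω) : (m : ℤ) ≤ Spt xi m ω := by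
  rw [Spt_natCast]
  calc (m : ℤ) = ∑ _j ∈ Finset.range m, 1 := by simp
    _ ≤ _ := Finset.sum_le_sum fun j _ => by exact_mod_cast hpos (j + 1) ω

lemma Spt_add_one (n : ℤ) (ω : Ω) : Spt xi (n + 1) ω = Spt xi n ω + xi (n + 1) ω := by
  rcases lt_trichotomy n (-1) with h | rfl | h
  · have hK : (-n).toNat = (-(n + 1)).toNat + 1 := by omega
    simp only [Spt, if_neg (by omega : ¬0 ≤ n + 1), if_neg (by omega : ¬0 ≤ n), hK,
      Finset.sum_range_succ', Nat.cast_add, Nat.cast_one, Nat.cast_zero, add_zero]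
    simp only [add_assoc, add_comm (1 : ℤ)]
    ring
  · simp [Spt]
  · have hK : (n + 1).toNat = n.toNat + 1 := by omega
    simp [Spt, if_pos (by omega : 0 ≤ n + 1), if_pos (by omega : 0 ≤ n), hK,
      Finset.sum_range_succ, Int.toNat_of_nonneg (by omega : 0 ≤ n)]

lemma Spt_strictMono (hpos : ∀ k ω, 1 ≤ xi k ω) (ω : Ω) : StrictMono (Spt xi · ω) :=
  strictMono_int_of_lt_succ fun n => by
    have := hpos (n + 1) ω
    rw [Spt_add_one]
    omega

lemma envP_of_Spt_eq (hpos : ∀ k ω, 1 ≤ xi k ω) {n k : ℤ} {ω : Ω} (h : Spt xi n ω = k) :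
    envP xi lam k ω = lam (n + 1) ω := by
  have hex : ∃ m, Spt xi m ω = k := ⟨n, h⟩
  rw [envP, dif_pos hex, (Spt_strictMono hpos ω).injective (hex.choose_spec.trans h.symm)]

lemma envP_of_forall_Spt_ne {k : ℤ} {ω : Ω} (h : ∀ n, Spt xi n ω ≠ k) :
    envP xi lam k ω = 1 / 2 := by
  simp [envP, h]

lemma envP_mem_Icc (hlam : ∀ k ω, lam k ω ∈ Ioo (0 : ℝ) 1) (k : ℤ) (ω : Ω) :
    envP xi lam k ω ∈ Icc (0 : ℝ) 1 := by
  unfold envP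
  split_ifs with h
  · exact Ioo_subset_Icc_self (hlam _ ω)
  · norm_num

end

lemma measurable_Spt (hxi : ∀ k, Measurable (xi k)) (n : ℤ) :
    Measurable (Spt xi n) := by
  unfold Spt
  split_ifs <;> fun_prop

lemma measurable_envP (hxi : ∀ k, Measurable (xi k)) (hlam : ∀ k, Measurable (lam k))
    (hpos : ∀ k ω, 1 ≤ xi k ω) (k : ℤ) : Measurable (envP xi lam k) := by
  refine measurable_of_eqOn_cover (ι := Option ℤ)
    (t := fun o => o.elim {ω | ∀ n, Spt xi n ω ≠ k} fun n => {ω | Spt xi n ω = k})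
    (g := fun o => o.elim (fun _ => 1 / 2) fun n => lam (n + 1)) ?_ ?_ ?_ ?_
  · rintro (_ | n)
    · simp only [Option.elim, ofPred_forall]
      exact .iInter fun n => (measurable_Spt hxi n (measurableSet_singleton k)).compl
    · exact measurable_Spt hxi n (measurableSet_singleton k)
  · refine eq_univ_of_forall fun ω => ?_
    by_cases h : ∃ n, Spt xi n ω = k
    · obtain ⟨n, hn⟩ := h
      exact mem_iUnion.2 ⟨some n, hn⟩
    · exact mem_iUnion.2 ⟨none, by simpa using h⟩
  · rintro (_ | n)
    exacts [measurable_const, hlam _]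
  · rintro (_ | n) ω hω
    exacts [envP_of_forall_Spt_ne hω, envP_of_Spt_eq hpos hω]

end Environment

section Paths

omit [MeasurableSpace Ω]

def IsNearestNeighbourPath (p : ℕ → ℤ) : Prop :=
  ∀ n, p (n + 1) = p n + 1 ∨ p (n + 1) = p n - 1

lemma IsNearestNeighbourPath.exists_eq_of_le {p : ℕ → ℤ} (hp : IsNearestNeighbourPath p)
    (h0 : p 0 = 0) {a : ℤ} (ha : 0 ≤ a) {m : ℕ} (hm : a ≤ p m) : ∃ j ≤ m, p j = a := by
  induction m with
  | zero => exact ⟨0, le_rfl, by omega⟩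
  | succ m ih =>
    by_cases hc : a ≤ p m
    · obtain ⟨j, hj, hja⟩ := ih hc
      exact ⟨j, by omega, hja⟩
    · exact ⟨m + 1, le_rfl, by rcases hp m with h | h <;> omega⟩

variable {X : ℕ → Ω → ℤ} {ω : Ω}

lemma hitT_le_hitT (hX : IsNearestNeighbourPath (X · ω)) (h0 : X 0 ω = 0) {a N : ℤ}
    (ha : 0 ≤ a) (haN : a ≤ N) (hN : ∃ j, X j ω = N) : hitT X a ω ≤ hitT X N ω := by
  have hhit : X (hitT X N ω) ω = N := Nat.sInf_mem hN
  obtain ⟨j, hj, hja⟩ := hX.exists_eq_of_le h0 ha (m := hitT X N ω) (by omega)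
  exact (Nat.sInf_le hja).trans hj

lemma maxLoc_le_maxLoc (hX : IsNearestNeighbourPath (X · ω)) (h0 : X 0 ω = 0) {a N : ℤ}
    (ha : 0 ≤ a) (haN : a ≤ N) (hN : ∃ j, X j ω = N) : maxLoc X a ω ≤ maxLoc X N ω := by
  refine iSup₂_le fun k hk => le_iSup₂_of_le k (hk.trans haN) ?_
  have := hitT_le_hitT hX h0 ha haN hN
  unfold locL
  gcongr

lemma one_le_maxLoc (h0 : X 0 ω = 0) {N : ℤ} (hN : 0 ≤ N) : 1 ≤ maxLoc X N ω :=
  le_iSup₂_of_le 0 hN <| by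
    simpa [locL] using ⟨0, by simp [h0]⟩

lemma maxLoc_le_one {N : ℤ} (hN : ∀ j, X j ω ≠ N) : maxLoc X N ω ≤ 1 := by
  -- `T_N = sInf ∅ = 0` for a site that is never visited, so only time `0` is counted.
  have hT : hitT X N ω = 0 := by simp [hitT, hN]
  refine iSup₂_le fun k _ => ?_
  have : locL X k N ω ≤ 1 := by
    simpa [locL, hT] using Finset.card_filter_le (Finset.range 1) _
  exact_mod_cast this

end Paths

namespace IsRWSRE

variable {Pr : Measure Ω} {xi : ℤ → Ω → ℕ} {lam : ℤ → Ω → ℝ} {X : ℕ → Ω → ℤ} {b : ℕ → ℝ}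

lemma integrable_envP [IsFiniteMeasure Pr] (hRW : IsRWSRE Pr xi lam X) (n : ℕ) :
    Integrable (fun ω => envP xi lam (X n ω) ω) Pr := by
  have henv : Measurable fun p : Ω × ℤ => envP xi lam p.2 p.1 :=
    measurable_from_prod_countable_left (measurable_envP hRW.meas_xi hRW.meas_lam hRW.xi_pos)
  have hmeas : Measurable fun ω => envP xi lam (X n ω) ω :=
    henv.comp (measurable_id.prodMk (hRW.meas_X n))
  refine (integrable_const (1 : ℝ)).mono' hmeas.aestronglyMeasurable (.of_forall fun ω => ?_)
  obtain ⟨h0, h1⟩ := envP_mem_Icc hRW.lam_mem (X n ω) ω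
  rwa [Real.norm_of_nonneg h0]

lemma ae_tendsto_Spt_div (hRW : IsRWSRE Pr xi lam X)
    (hmom : Integrable (fun ω => (xi 0 ω : ℝ)) Pr) :
    ∀ᵐ ω ∂Pr, Tendsto (fun m : ℕ => (Spt xi m ω : ℝ) / m) atTop
      (𝓝 (∫ ω, (xi 0 ω : ℝ) ∂Pr)) := by
  set Y : ℕ → Ω → ℝ := fun j ω => xi (j + 1) ω
  have hcast : Measurable fun p : ℕ × ℝ => (p.1 : ℝ) := by fun_prop
  have hY : ∀ j : ℕ, IdentDistrib (Y j) (fun ω => (xi 0 ω : ℝ)) Pr Pr := fun j =>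
    (hRW.ident (j + 1)).comp hcast
  have hindep : Pairwise fun i j => IndepFun (Y i) (Y j) Pr := fun i j hij =>
    (hRW.indep.indepFun (by simpa using hij)).comp hcast hcast
  have hslln := strong_law_ae_real Y ((hY 0).integrable_iff.2 hmom) hindep
    fun j => (hY j).trans (hY 0).symm
  rw [(hY 0).integral_eq] at hslln
  filter_upwards [hslln] with ω hω
  simpa [Y, Spt_natCast] using hω

lemma ae_tendsto_Spt_floor_mul_div (hRW : IsRWSRE Pr xi lam X)
    (hmom : Integrable (fun ω => (xi 0 ω : ℝ)) Pr) {t : ℝ} (ht : 0 < t) :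
    ∀ᵐ ω ∂Pr, Tendsto (fun n : ℕ => (Spt xi ⌊t * n⌋₊ ω : ℝ) / n) atTop
      (𝓝 ((∫ ω, (xi 0 ω : ℝ) ∂Pr) * t)) := by
  have hk := tendsto_nat_floor_mul_atTop t ht
  have hkn : Tendsto (fun n : ℕ => (⌊t * n⌋₊ : ℝ) / n) atTop (𝓝 t) :=
    (tendsto_nat_floor_mul_div_atTop ht.le).comp tendsto_natCast_atTop_atTop
  filter_upwards [hRW.ae_tendsto_Spt_div hmom] with ω hω
  refine ((hω.comp hk).mul hkn).congr' ?_
  filter_upwards [hk.eventually_ne_atTop 0] with n hn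
  simp [div_mul_div_cancel₀ ((Nat.cast_ne_zero (R := ℝ)).2 hn)]

lemma measurableSet_forall_ne_Spt (hRW : IsRWSRE Pr xi lam X) (k : ℤ) :
    MeasurableSet {ω | ∀ j, X j ω ≠ Spt xi k ω} := by
  simp only [ofPred_forall]
  exact .iInter fun j => (measurableSet_eq_fun (hRW.meas_X j) (measurable_Spt hRW.meas_xi k)).compl

variable [IsProbabilityMeasure Pr]

lemma ae_step (hRW : IsRWSRE Pr xi lam X) (n : ℕ) :
    ∀ᵐ ω ∂Pr, X (n + 1) ω = X n ω + 1 ∨ X (n + 1) ω = X n ω - 1 := by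
  set U := {ω | X (n + 1) ω = X n ω + 1}
  set D := {ω | X (n + 1) ω = X n ω - 1}
  have hup : Pr.real U = ∫ ω, envP xi lam (X n ω) ω ∂Pr := by
    simpa [measureReal_def] using hRW.step_up n univ MeasurableSet.univ
  have hdown : Pr.real D = ∫ ω, (1 - envP xi lam (X n ω) ω) ∂Pr := by
    simpa [measureReal_def] using hRW.step_down n univ MeasurableSet.univ
  have hU : MeasurableSet U := measurableSet_eq_fun (hRW.meas_X _) ((hRW.meas_X n).add_const 1)
  have hD : MeasurableSet D := measurableSet_eq_fun (hRW.meas_X _) ((hRW.meas_X n).sub_const 1)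
  have hdisj : Disjoint U D := disjoint_left.2 fun ω h1 h2 => by
    simp only [U, D, mem_ofPred_eq] at h1 h2
    omega
  have hUD : Pr.real (U ∪ D) = 1 := by
    have hint : Integrable (fun ω => 1 - envP xi lam (X n ω) ω) Pr :=
      (integrable_const 1).sub (hRW.integrable_envP n)
    rw [measureReal_union hdisj hD, hup, hdown, ← integral_add (hRW.integrable_envP n) hint]
    simp
  suffices ∀ᵐ ω ∂Pr, ω ∈ U ∪ D from this
  rw [ae_mem_iff_measure_eq (hU.union hD).nullMeasurableSet, measure_univ]
  exact (ENNReal.toReal_eq_one_iff _).1 hUD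

lemma ae_isNearestNeighbourPath (hRW : IsRWSRE Pr xi lam X) :
    ∀ᵐ ω ∂Pr, IsNearestNeighbourPath (X · ω) :=
  ae_all_iff.2 hRW.ae_step

lemma one_le_integral_xi (hRW : IsRWSRE Pr xi lam X)
    (hmom : Integrable (fun ω => (xi 0 ω : ℝ)) Pr) : 1 ≤ ∫ ω, (xi 0 ω : ℝ) ∂Pr := by
  simpa using integral_mono (integrable_const 1) hmom fun ω =>
    (show (1 : ℝ) ≤ xi 0 ω by exact_mod_cast hRW.xi_pos 0 ω)

lemma tendsto_measureReal_Spt_floor_lt (hRW : IsRWSRE Pr xi lam X)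
    (hmom : Integrable (fun ω => (xi 0 ω : ℝ)) Pr) {t : ℝ} (ht : 0 < t)
    (htE : 1 < (∫ ω, (xi 0 ω : ℝ) ∂Pr) * t) :
    Tendsto (fun n : ℕ => Pr.real {ω | Spt xi ⌊t * n⌋₊ ω < n}) atTop (𝓝 0) := by
  have hmeas (n : ℕ) : AEStronglyMeasurable (fun ω => (Spt xi ⌊t * n⌋₊ ω : ℝ) / n) Pr :=
    ((measurable_from_top.comp (measurable_Spt hRW.meas_xi _)).div_const _).aestronglyMeasurable
  refine squeeze_zero' (.of_forall fun _ => measureReal_nonneg) ?_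
    (tendsto_measureReal_setOf_notMem hmeas (hRW.ae_tendsto_Spt_floor_mul_div hmom ht)
      (Ioi_mem_nhds htE))
  filter_upwards [eventually_gt_atTop 0] with n hn
  refine measureReal_mono fun ω hω => ?_
  simp only [mem_ofPred_eq, mem_Ioi, not_lt] at hω ⊢
  rw [div_le_one (by positivity)]
  exact_mod_cast hω.le

lemma tendsto_measureReal_lt_Spt_floor (hRW : IsRWSRE Pr xi lam X)
    (hmom : Integrable (fun ω => (xi 0 ω : ℝ)) Pr) {t : ℝ} (ht : 0 < t)
    (htE : (∫ ω, (xi 0 ω : ℝ) ∂Pr) * t < 1) :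
    Tendsto (fun n : ℕ => Pr.real {ω | (n : ℤ) < Spt xi ⌊t * n⌋₊ ω}) atTop (𝓝 0) := by
  have hmeas (n : ℕ) : AEStronglyMeasurable (fun ω => (Spt xi ⌊t * n⌋₊ ω : ℝ) / n) Pr :=
    ((measurable_from_top.comp (measurable_Spt hRW.meas_xi _)).div_const _).aestronglyMeasurable
  refine squeeze_zero' (.of_forall fun _ => measureReal_nonneg) ?_
    (tendsto_measureReal_setOf_notMem hmeas (hRW.ae_tendsto_Spt_floor_mul_div hmom ht)
      (Iio_mem_nhds htE))
  filter_upwards [eventually_gt_atTop 0] with n hn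
  refine measureReal_mono fun ω hω => ?_
  simp only [mem_ofPred_eq, mem_Iio, not_lt] at hω ⊢
  rw [one_le_div (by positivity)]
  exact_mod_cast hω.le

lemma eventually_one_le_mul (hRW : IsRWSRE Pr xi lam X) {y L : ℝ}
    (hQ : Tendsto (fun k : ℕ =>
      Pr.real {ω | ENNReal.ofReal (y * b k) < maxLoc X (Spt xi k ω) ω}) atTop (𝓝 L))
    (hL : L < 1) : ∀ᶠ k in atTop, 1 ≤ y * b k := by
  filter_upwards [hQ.eventually_lt_const hL] with k hk
  by_contra! hyb
  have huniv : {ω | ENNReal.ofReal (y * b k) < maxLoc X (Spt xi k ω) ω} = univ :=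
    eq_univ_of_forall fun ω => (ENNReal.ofReal_lt_one.2 hyb).trans_le
      (one_le_maxLoc (hRW.start ω) (Spt_natCast_nonneg k ω))
  simp [huniv] at hk

lemma tendsto_measureReal_forall_ne_Spt (hRW : IsRWSRE Pr xi lam X) {c γ : ℝ} (hc : 0 < c)
    (hγ : 0 < γ) (hlim : ∀ y : ℝ, 0 < y → Tendsto (fun k : ℕ =>
      Pr.real {ω | ENNReal.ofReal (y * b k) < maxLoc X (Spt xi k ω) ω}) atTop
      (𝓝 (1 - Real.exp (-c * y ^ (-γ))))) :
    Tendsto (fun k : ℕ => Pr.real {ω | ∀ j, X j ω ≠ Spt xi k ω}) atTop (𝓝 0) := by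
  refine tendsto_order.2 ⟨fun a ha => .of_forall fun k => ha.trans_le measureReal_nonneg,
    fun a ha => ?_⟩
  have hexp : Tendsto (fun y : ℝ => Real.exp (-c * y ^ (-γ))) (𝓝[>] 0) (𝓝 0) :=
    Real.tendsto_exp_atBot.comp
      ((tendsto_rpow_neg_nhdsGT_zero (neg_lt_zero.2 hγ)).const_mul_atTop_of_neg (neg_lt_zero.2 hc))
  obtain ⟨y, hya, hy⟩ := ((hexp.eventually (gt_mem_nhds ha)).and self_mem_nhdsWithin).exists
  have hQc : Tendsto (fun k : ℕ =>
      1 - Pr.real {ω | ENNReal.ofReal (y * b k) < maxLoc X (Spt xi k ω) ω}) atTop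
      (𝓝 (Real.exp (-c * y ^ (-γ)))) := by
    simpa using (hlim y hy).const_sub 1
  filter_upwards [hQc.eventually_lt_const hya, hRW.eventually_one_le_mul (hlim y hy)
    (sub_lt_self 1 (Real.exp_pos _))] with k hk hyb
  refine lt_of_le_of_lt ?_ hk
  rw [le_sub_comm, ← probReal_compl_eq_one_sub (hRW.measurableSet_forall_ne_Spt k)]
  refine measureReal_mono fun ω hQ hJ => ?_
  exact (ENNReal.one_le_ofReal.2 hyb).not_gt (hQ.trans_le (maxLoc_le_one hJ))

lemma measureReal_maxLoc_le (hRW : IsRWSRE Pr xi lam X) {x y : ℝ} {k n : ℕ}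
    (hb : y * b k ≤ x * b n) :
    Pr.real {ω | ENNReal.ofReal (x * b n) < maxLoc X n ω} ≤
      Pr.real {ω | ENNReal.ofReal (y * b k) < maxLoc X (Spt xi k ω) ω} +
        Pr.real {ω | Spt xi k ω < n} + Pr.real {ω | ∀ j, X j ω ≠ Spt xi k ω} := by
  refine measureReal_le_add_add_of_ae ?_
  filter_upwards [hRW.ae_isNearestNeighbourPath] with ω hω hR
  by_contra! hnot
  obtain ⟨hQ, hS, hvisit⟩ := hnot
  exact (hQ.trans_lt (ENNReal.ofReal_le_ofReal hb |>.trans_lt hR)).not_ge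
    (maxLoc_le_maxLoc hω (hRW.start ω) n.cast_nonneg hS hvisit)

lemma measureReal_maxLoc_Spt_le (hRW : IsRWSRE Pr xi lam X) {x y : ℝ} {k n : ℕ}
    (hb : x * b n ≤ y * b k) :
    Pr.real {ω | ENNReal.ofReal (y * b k) < maxLoc X (Spt xi k ω) ω} ≤
      Pr.real {ω | ENNReal.ofReal (x * b n) < maxLoc X n ω} +
        Pr.real {ω | (n : ℤ) < Spt xi k ω} + Pr.real {ω | ∀ j, X j ω ≠ Spt xi n ω} := by
  refine measureReal_le_add_add_of_ae ?_
  filter_upwards [hRW.ae_isNearestNeighbourPath] with ω hω hQ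
  by_contra! hnot
  obtain ⟨hR, hS, j, hj⟩ := hnot
  obtain ⟨i, -, hi⟩ := hω.exists_eq_of_le (hRW.start ω) n.cast_nonneg
    (hj ▸ natCast_le_Spt hRW.xi_pos n ω)
  exact (hR.trans_lt (ENNReal.ofReal_le_ofReal hb |>.trans_lt hQ)).not_ge
    (maxLoc_le_maxLoc hω (hRW.start ω) (Spt_natCast_nonneg k ω) hS ⟨i, hi⟩)

section

variable {t ρ x y L a : ℝ}

lemma eventually_measureReal_maxLoc_lt (hRW : IsRWSRE Pr xi lam X)
    (hmom : Integrable (fun ω => (xi 0 ω : ℝ)) Pr) (ht : 0 < t)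
    (htE : 1 < (∫ ω, (xi 0 ω : ℝ) ∂Pr) * t) (hb0 : ∀ᶠ n in atTop, 0 < b n)
    (hbt : Tendsto (fun n : ℕ => b ⌊t * n⌋₊ / b n) atTop (𝓝 ρ)) (hyx : y * ρ < x)
    (hQ : Tendsto (fun k : ℕ =>
      Pr.real {ω | ENNReal.ofReal (y * b k) < maxLoc X (Spt xi k ω) ω}) atTop (𝓝 L))
    (hJ : Tendsto (fun k : ℕ => Pr.real {ω | ∀ j, X j ω ≠ Spt xi k ω}) atTop (𝓝 0))
    (ha : L < a) :
    ∀ᶠ n : ℕ in atTop, Pr.real {ω | ENNReal.ofReal (x * b n) < maxLoc X n ω} < a := by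
  have hk := tendsto_nat_floor_mul_atTop t ht
  have hbound := ((hQ.comp hk).add (hRW.tendsto_measureReal_Spt_floor_lt hmom ht htE)).add
    (hJ.comp hk)
  rw [add_zero, add_zero] at hbound
  filter_upwards [hbound.eventually_lt_const ha,
    eventually_mul_lt_mul_of_tendsto_div_of_mul_lt hb0 hbt hyx] with n hn hbn
  exact (hRW.measureReal_maxLoc_le hbn.le).trans_lt hn

lemma eventually_lt_measureReal_maxLoc (hRW : IsRWSRE Pr xi lam X)
    (hmom : Integrable (fun ω => (xi 0 ω : ℝ)) Pr) (ht : 0 < t)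
    (htE : (∫ ω, (xi 0 ω : ℝ) ∂Pr) * t < 1) (hb0 : ∀ᶠ n in atTop, 0 < b n)
    (hbt : Tendsto (fun n : ℕ => b ⌊t * n⌋₊ / b n) atTop (𝓝 ρ)) (hxy : x < y * ρ)
    (hQ : Tendsto (fun k : ℕ =>
      Pr.real {ω | ENNReal.ofReal (y * b k) < maxLoc X (Spt xi k ω) ω}) atTop (𝓝 L))
    (hJ : Tendsto (fun k : ℕ => Pr.real {ω | ∀ j, X j ω ≠ Spt xi k ω}) atTop (𝓝 0))
    (ha : a < L) :
    ∀ᶠ n : ℕ in atTop, a < Pr.real {ω | ENNReal.ofReal (x * b n) < maxLoc X n ω} := by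
  have hbound := ((hQ.comp (tendsto_nat_floor_mul_atTop t ht)).sub
    (hRW.tendsto_measureReal_lt_Spt_floor hmom ht htE)).sub hJ
  rw [sub_zero, sub_zero] at hbound
  filter_upwards [hbound.eventually_const_lt ha,
    eventually_mul_lt_mul_of_tendsto_div_of_lt_mul hb0 hbt hxy] with n hn hbn
  have := hRW.measureReal_maxLoc_Spt_le hbn.le
  simp only [Function.comp_apply] at hn
  linarith

end

end IsRWSRE

theorem max_local_time_marked_to_all_general
    (Pr : Measure Ω) [IsProbabilityMeasure Pr]
    (xi : ℤ → Ω → ℕ) (lam : ℤ → Ω → ℝ) (X : ℕ → Ω → ℤ)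
    (hRW : IsRWSRE Pr xi lam X)
    (hmomξ : Integrable (fun ω => (xi 0 ω : ℝ)) Pr)
    (c γ : ℝ) (hc : 0 < c) (hγ : 0 < γ) (b : ℕ → ℝ)
    (hb : ∀ t : ℝ, 0 < t →
      Tendsto (fun n : ℕ => b ⌊t * (n : ℝ)⌋₊ / b n) atTop (nhds (t ^ (1 / γ))))
    (hlim : ∀ x : ℝ, 0 < x →
      Tendsto (fun n : ℕ =>
          (Pr {ω | ENNReal.ofReal (x * b n) < maxLoc X (Spt xi n ω) ω}).toReal)
        atTop (nhds (1 - Real.exp (-c * x ^ (-γ))))) :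
    ∀ x : ℝ, 0 < x →
      Tendsto (fun n : ℕ =>
          (Pr {ω | ENNReal.ofReal (x * b n) < maxLoc X n ω}).toReal)
        atTop (nhds (1 - Real.exp (-(c / ∫ ω, (xi 0 ω : ℝ) ∂Pr) * x ^ (-γ)))) := by
  intro x hx
  set E := ∫ ω, (xi 0 ω : ℝ) ∂Pr
  have hE : 0 < E := zero_lt_one.trans_le (hRW.one_le_integral_xi hmomξ)
  have hb0 : ∀ᶠ n in atTop, 0 < b n :=
    (hRW.eventually_one_le_mul (hlim 1 one_pos) (sub_lt_self 1 (Real.exp_pos _))).mono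
      fun n hn => by linarith
  have hJ := hRW.tendsto_measureReal_forall_ne_Spt hc hγ hlim
  have hz : 0 < x * E ^ (1 / γ) := by positivity
  have hzγ : (x * E ^ (1 / γ)) ^ (-γ) = x ^ (-γ) / E := by
    rw [Real.mul_rpow hx.le (by positivity), ← Real.rpow_mul hE.le,
      show 1 / γ * -γ = -1 by field_simp, Real.rpow_neg_one, div_eq_mul_inv]
  rw [show -(c / E) * x ^ (-γ) = -c * (x * E ^ (1 / γ)) ^ (-γ) by rw [hzγ]; ring]
  refine tendsto_of_forall_eventually_lt (f := fun y => 1 - Real.exp (-c * y ^ (-γ)))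
    (by fun_prop (disch := exact Or.inl hz.ne')) ?_ ?_
  · filter_upwards [Ioo_mem_nhdsLT hz] with y ⟨hy, hyz⟩ a ha
    obtain ⟨t, ht, htE, hyt⟩ := exists_one_lt_mul_and_mul_rpow_lt hE hγ hyz
    exact hRW.eventually_measureReal_maxLoc_lt hmomξ ht htE hb0 (hb t ht) hyt (hlim y hy) hJ ha
  · filter_upwards [self_mem_nhdsWithin] with y (hzy : _ < y) a ha
    obtain ⟨t, ht, htE, hxt⟩ := exists_mul_lt_one_and_lt_mul_rpow hE hγ hzy
    exact hRW.eventually_lt_measureReal_maxLoc hmomξ ht htE hb0 (hb t ht) hxt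
      (hlim y (hz.trans hzy)) hJ ha

/-- Passing from the maximum along marked points `S_n` to the maximum along all points:
if the maximal local time up to `S_n`, scaled by a regularly varying `b(n)`, has a Fréchet
limit with constant `c`, then the one up to `n` has one with constant `c/Eξ`. -/
theorem max_local_time_marked_to_all
    (Pr : Measure Ω) [IsProbabilityMeasure Pr]
    (xi : ℤ → Ω → ℕ) (lam : ℤ → Ω → ℝ) (X : ℕ → Ω → ℤ)
    (hRW : IsRWSRE Pr xi lam X)
    -- transience: E log ξ < ∞ and E log ρ < 0
    (hlogxi : Integrable (fun ω => Real.log (xi 0 ω)) Pr)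
    (hlogrho : Integrable (fun ω => Real.log (rhoF lam 0 ω)) Pr)
    (hlogrho_neg : ∫ ω, Real.log (rhoF lam 0 ω) ∂Pr < 0)
    (hmomξ : Integrable (fun ω => (xi 0 ω : ℝ)) Pr)
    (c γ : ℝ) (hc : 0 < c) (hγ : 0 < γ) (b : ℕ → ℝ)
    (hb : ∀ t : ℝ, 0 < t →
      Tendsto (fun n : ℕ => b ⌊t * (n : ℝ)⌋₊ / b n) atTop (nhds (t ^ (1 / γ))))
    (hlim : ∀ x : ℝ, 0 < x →
      Tendsto (fun n : ℕ =>
          (Pr {ω | ENNReal.ofReal (x * b n) < maxLoc X (Spt xi n ω) ω}).toReal)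
        atTop (nhds (1 - Real.exp (-c * x ^ (-γ))))) :
    ∀ x : ℝ, 0 < x →
      Tendsto (fun n : ℕ =>
          (Pr {ω | ENNReal.ofReal (x * b n) < maxLoc X n ω}).toReal)
        atTop (nhds (1 - Real.exp (-(c / ∫ ω, (xi 0 ω : ℝ) ∂Pr) * x ^ (-γ)))) :=
  max_local_time_marked_to_all_general Pr xi lam X hRW hmomξ c γ hc hγ b hb hlim
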